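/- arXiv:2407.07350 — 6 statements merged into one kernel-verified Lean document; each statement's English description precedes it below -/
import Mathlib

section
/- Suppose for each institution k ∈ {1,…,K} the action satisfies the recursion π_k = γ_k · (s + (1/c_k)·Σ_{j=1}^{k-1} c_j (s - π_j)) + (1 - γ_k)·α, with γ_k ∈ [0,1], capacities c_k > 0, state s ∈ [0,1], and target α ∈ [0,1]. Then for every k the pre-projection score-optimal action satisfies s + (1/c_k)·Σ_{j=1}^{k-1} c_j (s - π_j) = s + (s - α)·(1/c_k)·Σ_{j=1}^{k-1} c_j ∏_{i=j}^{k-1} (1 - γ_i). -/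
/-- Under the recursion
`p k = γ k·(s + (1/c k)·Σ_{j<k} c j (s - p j)) + (1-γ k)·α`,
the pre-projection score-optimal action satisfies
`s + (1/c_k)·Σ_{j=1}^{k-1} c_j (s - p_j) = s + (s - α)·(1/c_k)·Σ_{j=1}^{k-1} c_j ∏_{i=j}^{k-1} (1 - γ_i)`. -/
theorem stmt2 (K : ℕ) (c γ p : ℕ → ℝ) (s α : ℝ)
    (hs : s ∈ Set.Icc (0:ℝ) 1) (hα : α ∈ Set.Icc (0:ℝ) 1)
    (hc : ∀ k ∈ Finset.Icc 1 K, 0 < c k)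
    (hγ : ∀ k ∈ Finset.Icc 1 K, γ k ∈ Set.Icc (0:ℝ) 1)
    (hrec : ∀ k ∈ Finset.Icc 1 K,
      p k = γ k * (s + (1 / c k) * ∑ j ∈ Finset.Ico 1 k, c j * (s - p j)) + (1 - γ k) * α) :
    ∀ k ∈ Finset.Icc 1 K,
      s + (1 / c k) * ∑ j ∈ Finset.Ico 1 k, c j * (s - p j)
        = s + (s - α) * (1 / c k) * ∑ j ∈ Finset.Ico 1 k, c j * ∏ i ∈ Finset.Ico j k, (1 - γ i) := by
  have key : ∀ k, k ≤ K + 1 →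
      (∑ j ∈ Finset.Ico 1 k, c j * (s - p j))
        = (s - α) * ∑ j ∈ Finset.Ico 1 k, c j * ∏ i ∈ Finset.Ico j k, (1 - γ i) := by
    intro k
    induction k with
    | zero => simp
    | succ n ih =>
      intro hn
      by_cases h1 : 1 ≤ n
      · have hnK : n ∈ Finset.Icc 1 K := by
          simp only [Finset.mem_Icc]; omega
        have hcn := hc n hnK
        have hSn := ih (by omega)
        have hpn := hrec n hnK
        have hsp : s - p n = (1 - γ n) * (s - α)
            - γ n * (1 / c n) * ∑ j ∈ Finset.Ico 1 n, c j * (s - p j) := by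
          rw [hpn]; ring
        rw [Finset.sum_Ico_succ_top h1, Finset.sum_Ico_succ_top h1]
        have hprod : ∀ j ∈ Finset.Ico 1 n,
            c j * ∏ i ∈ Finset.Ico j (n + 1), (1 - γ i)
              = (c j * ∏ i ∈ Finset.Ico j n, (1 - γ i)) * (1 - γ n) := by
          intro j hj
          rw [Finset.prod_Ico_succ_top (Finset.mem_Ico.mp hj).2.le]
          ring
        rw [Finset.sum_congr rfl hprod, ← Finset.sum_mul]
        have hcn' : c n ≠ 0 := ne_of_gt hcn
        rw [hsp, hSn]
        rw [Finset.prod_Ico_succ_top le_rfl, Finset.Ico_self, Finset.prod_empty]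
        field_simp
        ring
      · have hn0 : n = 0 := by omega
        subst hn0
        simp
  intro k hk
  have hkK : k ≤ K + 1 := by
    have := (Finset.mem_Icc.mp hk).2; omega
  rw [key k hkK]
  ring
end

section
/- Under the recursion π_k = γ_k·(s + (1/c_k)·Σ_{j=1}^{k-1} c_j (s - π_j)) + (1-γ_k)·α with γ_k ∈ [0,1] and c_k > 0, the capacity-weighted average π^W = (Σ_{k=1}^K c_k π_k)/(Σ_{k=1}^K c_k) satisfies π^W = s + (α - s)·γ̄ where γ̄ = (Σ_{j=1}^K c_j ∏_{i=j}^K (1 - γ_i))/(Σ_{j=1}^K c_j), and γ̄ ∈ [0,1]. -/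
/-!
Write `D_k = Σ_{j ≤ k} c_j (s - π_j)` for the accumulated shortfall. The recursion gives
`c_k (s - π_k) = (1 - γ_k) c_k (s - α) - γ_k D_{k-1}`, hence `D_k = (1 - γ_k) (D_{k-1} + c_k (s - α))`,
and `W_k = Σ_{j ≤ k} c_j ∏_{i=j}^k (1 - γ_i)` satisfies `W_k = (1 - γ_k) (W_{k-1} + c_k)`.
So `D_K = (s - α) W_K`, which is the identity after dividing by `Σ c_k`. Finally `γ̄ = W_K / Σ c_k`
is a `c`-weighted average of products of numbers in `[0,1]`.
-/

open Finset

theorem prod_one_sub_mem_Icc {ι : Type*} (t : Finset ι) (γ : ι → ℝ)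
    (hγ : ∀ i ∈ t, γ i ∈ Set.Icc (0:ℝ) 1) : ∏ i ∈ t, (1 - γ i) ∈ Set.Icc (0:ℝ) 1 :=
  ⟨prod_nonneg fun i hi => by linarith [(hγ i hi).2],
    prod_le_one (fun i hi => by linarith [(hγ i hi).2]) fun i hi => by linarith [(hγ i hi).1]⟩

theorem sum_mul_div_sum_mem_Icc {ι : Type*} (t : Finset ι) (w x : ι → ℝ)
    (hw : ∀ j ∈ t, 0 ≤ w j) (hx : ∀ j ∈ t, x j ∈ Set.Icc (0:ℝ) 1) :
    (∑ j ∈ t, w j * x j) / ∑ j ∈ t, w j ∈ Set.Icc (0:ℝ) 1 :=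
  ⟨div_nonneg (sum_nonneg fun j hj => mul_nonneg (hw j hj) (hx j hj).1) (sum_nonneg hw),
    div_le_one_of_le₀
      (sum_le_sum fun j hj => mul_le_of_le_one_right (hw j hj) (hx j hj).2) (sum_nonneg hw)⟩

theorem sum_Icc_mul_prod_Icc_one_sub_succ (c γ : ℕ → ℝ) (n : ℕ) :
    ∑ j ∈ Icc 1 (n + 1), c j * ∏ i ∈ Icc j (n + 1), (1 - γ i)
      = (∑ j ∈ Icc 1 n, c j * ∏ i ∈ Icc j n, (1 - γ i) + c (n + 1)) * (1 - γ (n + 1)) := by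
  rw [sum_Icc_succ_top (by omega), Icc_self, prod_singleton, add_mul, sum_mul]
  congr 1
  refine sum_congr rfl fun j hj => ?_
  rw [prod_Icc_succ_top (by have := (mem_Icc.mp hj).2; omega), mul_assoc]

theorem sum_Icc_mul_sub_eq_of_recursion (c γ p : ℕ → ℝ) (s α : ℝ) (n : ℕ)
    (hc : ∀ k ∈ Icc 1 n, c k ≠ 0)
    (hrec : ∀ k ∈ Icc 1 n,
      p k = γ k * (s + (1 / c k) * ∑ j ∈ Ico 1 k, c j * (s - p j)) + (1 - γ k) * α) :
    ∑ j ∈ Icc 1 n, c j * (s - p j)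
      = (s - α) * ∑ j ∈ Icc 1 n, c j * ∏ i ∈ Icc j n, (1 - γ i) := by
  induction n with
  | zero => simp
  | succ n ih =>
    have hsub : Icc 1 n ⊆ Icc 1 (n + 1) := Icc_subset_Icc_right n.le_succ
    have hlast : n + 1 ∈ Icc 1 (n + 1) := mem_Icc.mpr ⟨by omega, le_rfl⟩
    have hD := ih (fun k hk => hc k (hsub hk)) fun k hk => hrec k (hsub hk)
    have hp := hrec (n + 1) hlast
    rw [Ico_add_one_right_eq_Icc, hD] at hp
    rw [sum_Icc_succ_top (by omega), hD, sum_Icc_mul_prod_Icc_one_sub_succ, hp]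
    field_simp [hc (n + 1) hlast]
    ring

theorem stmt3_general (K : ℕ) (hK : 1 ≤ K) (c γ p : ℕ → ℝ) (s α : ℝ)
    (hc : ∀ k ∈ Finset.Icc 1 K, 0 < c k)
    (hγ : ∀ k ∈ Finset.Icc 1 K, γ k ∈ Set.Icc (0:ℝ) 1)
    (hrec : ∀ k ∈ Finset.Icc 1 K,
      p k = γ k * (s + (1 / c k) * ∑ j ∈ Finset.Ico 1 k, c j * (s - p j)) + (1 - γ k) * α) :
    (∑ k ∈ Finset.Icc 1 K, c k * p k) / (∑ k ∈ Finset.Icc 1 K, c k)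
      = s + (α - s) *
        ((∑ j ∈ Finset.Icc 1 K, c j * ∏ i ∈ Finset.Icc j K, (1 - γ i)) /
          (∑ j ∈ Finset.Icc 1 K, c j)) ∧
    (∑ j ∈ Finset.Icc 1 K, c j * ∏ i ∈ Finset.Icc j K, (1 - γ i)) /
        (∑ j ∈ Finset.Icc 1 K, c j) ∈ Set.Icc (0:ℝ) 1 := by
  have hC : ∑ k ∈ Icc 1 K, c k ≠ 0 := (sum_pos hc ⟨1, mem_Icc.mpr ⟨le_rfl, hK⟩⟩).ne'
  have hD := sum_Icc_mul_sub_eq_of_recursion c γ p s α K (fun k hk => (hc k hk).ne') hrec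
  have hsum : ∑ k ∈ Icc 1 K, c k * p k
      = s * ∑ k ∈ Icc 1 K, c k + (α - s) * ∑ j ∈ Icc 1 K, c j * ∏ i ∈ Icc j K, (1 - γ i) := by
    simp only [mul_sub, sum_sub_distrib, ← sum_mul] at hD
    linarith
  refine ⟨by rw [hsum]; field_simp, ?_⟩
  refine sum_mul_div_sum_mem_Icc _ c _ (fun j hj => (hc j hj).le) fun j hj => ?_
  exact prod_one_sub_mem_Icc _ γ fun i hi =>
    hγ i (Icc_subset_Icc_left (mem_Icc.mp hj).1 hi)

/-- The capacity-weighted average satisfies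
`π^W = s + (α - s)·γ̄` where `γ̄ = (Σ_j c_j ∏_{i=j}^K (1-γ_i))/(Σ_j c_j) ∈ [0,1]`. -/
theorem stmt3 (K : ℕ) (hK : 1 ≤ K) (c γ p : ℕ → ℝ) (s α : ℝ)
    (hs : s ∈ Set.Icc (0:ℝ) 1) (hα : α ∈ Set.Icc (0:ℝ) 1)
    (hc : ∀ k ∈ Finset.Icc 1 K, 0 < c k)
    (hγ : ∀ k ∈ Finset.Icc 1 K, γ k ∈ Set.Icc (0:ℝ) 1)
    (hrec : ∀ k ∈ Finset.Icc 1 K,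
      p k = γ k * (s + (1 / c k) * ∑ j ∈ Finset.Ico 1 k, c j * (s - p j)) + (1 - γ k) * α) :
    (∑ k ∈ Finset.Icc 1 K, c k * p k) / (∑ k ∈ Finset.Icc 1 K, c k)
      = s + (α - s) *
        ((∑ j ∈ Finset.Icc 1 K, c j * ∏ i ∈ Finset.Icc j K, (1 - γ i)) /
          (∑ j ∈ Finset.Icc 1 K, c j)) ∧
    (∑ j ∈ Finset.Icc 1 K, c j * ∏ i ∈ Finset.Icc j K, (1 - γ i)) /
        (∑ j ∈ Finset.Icc 1 K, c j) ∈ Set.Icc (0:ℝ) 1 :=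
  stmt3_general K hK c γ p s α hc hγ hrec
end

section
/- Suppose a ∈ [0,1] and the feasible interval is A = [max(0, 1 - (1 - s - C1)/c), min(1, (s - C0)/c)] where C0, C1 ≥ 0, C0 + C1 + c < 1, s ∈ (0,1), C0 ≤ s, C1 ≤ 1-s, and c > 0. Then the target α ∈ [0,1] and the unconstrained score-optimal point a* cannot both lie strictly to the left of A, nor both strictly to the right of A, where a* is the value equalizing (C0 + a·c)/s = (C1 + (1-a)·c)/(1-s). -/
/-- The fairness target `α` and the unconstrained score-optimal point
`a* = (s·(C0+C1+c) - C0)/c` (equalizing `(C0+a·c)/s = (C1+(1-a)·c)/(1-s)`) cannot both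
lie strictly to the left, nor both strictly to the right, of the feasible interval
`A = [max(0, 1-(1-s-C1)/c), min(1, (s-C0)/c)]`. -/
theorem stmt8 (s c C0 C1 α : ℝ)
    (hs : s ∈ Set.Ioo (0:ℝ) 1) (hc : 0 < c) (hC0 : 0 ≤ C0) (hC1 : 0 ≤ C1)
    (hsum : C0 + C1 + c < 1) (hC0s : C0 ≤ s) (hC1s : C1 ≤ 1 - s)
    (hα : α ∈ Set.Icc (0:ℝ) 1) :
    ¬(α < max 0 (1 - (1 - s - C1) / c) ∧
        (s * (C0 + C1 + c) - C0) / c < max 0 (1 - (1 - s - C1) / c)) ∧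
    ¬(min 1 ((s - C0) / c) < α ∧
        min 1 ((s - C0) / c) < (s * (C0 + C1 + c) - C0) / c) := by
  obtain ⟨hs0, hs1⟩ := hs
  obtain ⟨hα0, hα1⟩ := hα
  constructor
  · rintro ⟨h1, h2⟩
    have hLpos : (0:ℝ) < max 0 (1 - (1 - s - C1) / c) := lt_of_le_of_lt hα0 h1
    have hmax : max 0 (1 - (1 - s - C1) / c) = 1 - (1 - s - C1) / c := by
      rcases max_choice (0:ℝ) (1 - (1 - s - C1) / c) with h | h
      · rw [h] at hLpos; exact absurd hLpos (lt_irrefl 0)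
      · exact h
    rw [hmax] at h2
    have e : 1 - (1 - s - C1) / c = (c - (1 - s - C1)) / c := by
      field_simp
    rw [e] at h2
    have := (div_lt_div_iff_of_pos_right hc).mp h2
    nlinarith
  · rintro ⟨h1, h2⟩
    have hUlt : min 1 ((s - C0) / c) < 1 := lt_of_lt_of_le h1 hα1
    have hmin : min 1 ((s - C0) / c) = (s - C0) / c := by
      rcases min_choice (1:ℝ) ((s - C0) / c) with h | h
      · rw [h] at hUlt; exact absurd hUlt (lt_irrefl 1)
      · exact h
    rw [hmin] at h2
    have := (div_lt_div_iff_of_pos_right hc).mp h2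
    nlinarith
end

section
/- Let U(a) = R(a) - λ·(a - α)² on a compact interval A ⊆ [0,1], where R is concave and differentiable with a unique maximizer a_S ∈ ℝ (pre-projection), λ > 0, and α ∈ [0,1]. If a_S and α do not lie strictly on the same side outside A, then the maximizer of U over A is a convex combination ω·[a_S]_A + (1-ω)·[α]_A for some ω ∈ [0,1], where [·]_A denotes projection onto A. -/
/-- A concave function on ℝ with global max at `aS` is antitone to the right of `aS`. -/
lemma concave_anti_right {R : ℝ → ℝ} (hR : ConcaveOn ℝ Set.univ R) {aS x y : ℝ}
    (hmax : ∀ z, R z ≤ R aS) (h1 : aS ≤ x) (h2 : x ≤ y) : R y ≤ R x := by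
  rcases eq_or_lt_of_le h2 with rfl | h2
  · exact le_rfl
  have hy : aS < y := lt_of_le_of_lt h1 h2
  have hden : (0:ℝ) < y - aS := by linarith
  set t : ℝ := (y - x) / (y - aS) with ht
  have ht0 : 0 ≤ t := div_nonneg (by linarith) hden.le
  have ht1 : t ≤ 1 := by rw [div_le_one hden]; linarith
  have hx : t • aS + (1 - t) • y = x := by
    simp only [smul_eq_mul, ht]
    field_simp
    ring
  have hR2 := hR.2
  have hcc := hR2 (Set.mem_univ aS) (Set.mem_univ y) (a := t) (b := 1 - t) ht0
    (by linarith) (by ring)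
  rw [hx] at hcc
  have hRy : t • R y + (1 - t) • R y ≤ t • R aS + (1 - t) • R y := by
    simp only [smul_eq_mul]
    nlinarith [hmax y]
  have : t • R y + (1 - t) • R y = R y := by simp only [smul_eq_mul]; ring
  linarith [this ▸ hRy.trans hcc]

/-- A concave function on ℝ with global max at `aS` is monotone to the left of `aS`. -/
lemma concave_mono_left {R : ℝ → ℝ} (hR : ConcaveOn ℝ Set.univ R) {aS x y : ℝ}
    (hmax : ∀ z, R z ≤ R aS) (h1 : y ≤ x) (h2 : x ≤ aS) : R y ≤ R x := by
  rcases eq_or_lt_of_le h1 with rfl | h1'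
  · exact le_rfl
  have hy : y < aS := lt_of_lt_of_le h1' h2
  have hden : (0:ℝ) < aS - y := by linarith
  set t : ℝ := (x - y) / (aS - y) with ht
  have ht0 : 0 ≤ t := div_nonneg (by linarith) hden.le
  have ht1 : t ≤ 1 := by rw [div_le_one hden]; linarith
  have hx : t • aS + (1 - t) • y = x := by
    simp only [smul_eq_mul, ht]
    field_simp
    ring
  have hR2 := hR.2
  have hcc := hR2 (Set.mem_univ aS) (Set.mem_univ y) (a := t) (b := 1 - t) ht0
    (by linarith) (by ring)
  rw [hx] at hcc
  have hRy : t • R y + (1 - t) • R y ≤ t • R aS + (1 - t) • R y := by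
    simp only [smul_eq_mul]
    nlinarith [hmax y]
  have heq : t • R y + (1 - t) • R y = R y := by simp only [smul_eq_mul]; ring
  linarith [heq ▸ hRy.trans hcc]

/-- For `U(a) = R(a) - λ(a-α)²` with `R` concave differentiable having
unique maximizer `a_S`, `λ > 0`, and `a_S, α` not strictly on the same side outside the
compact interval `A = [ℓ,u]`, the maximizer of `U` over `A` is a convex combination of
the projections of `a_S` and `α` onto `A`. -/
theorem stmt9 (R : ℝ → ℝ) (lam α ℓ u aS : ℝ)
    (hsub : Set.Icc ℓ u ⊆ Set.Icc (0:ℝ) 1) (hlu : ℓ ≤ u)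
    (hlam : 0 < lam) (hα : α ∈ Set.Icc (0:ℝ) 1)
    (hR : ConcaveOn ℝ Set.univ R) (hdiff : Differentiable ℝ R)
    (haS : ∀ x, x ≠ aS → R x < R aS)
    (hside : ¬(aS < ℓ ∧ α < ℓ) ∧ ¬(u < aS ∧ u < α)) :
    ∃ ω ∈ Set.Icc (0:ℝ) 1,
      IsMaxOn (fun a => R a - lam * (a - α) ^ 2) (Set.Icc ℓ u)
        (ω * max ℓ (min aS u) + (1 - ω) * max ℓ (min α u)) := by
  set U : ℝ → ℝ := fun a => R a - lam * (a - α) ^ 2 with hUdef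
  set p : ℝ := max ℓ (min aS u) with hp
  set q : ℝ := max ℓ (min α u) with hq
  have hRmax : ∀ z, R z ≤ R aS := by
    intro z
    rcases eq_or_ne z aS with rfl | h
    · exact le_rfl
    · exact (haS z h).le
  have hcont : ContinuousOn U (Set.Icc ℓ u) := by
    apply Continuous.continuousOn
    exact hdiff.continuous.sub (by continuity)
  obtain ⟨m, hmmem, hmmax⟩ := isCompact_Icc.exists_isMaxOn
    ⟨ℓ, Set.left_mem_Icc.mpr hlu⟩ hcont
  obtain ⟨hml, hmu⟩ := hmmem
  have hpl : ℓ ≤ p := le_max_left _ _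
  have hpu : p ≤ u := max_le hlu (min_le_right _ _)
  have hql : ℓ ≤ q := le_max_left _ _
  have hqu : q ≤ u := max_le hlu (min_le_right _ _)
  set lo : ℝ := min p q with hlo
  set hi : ℝ := max p q with hhi
  have hlohi : lo ≤ hi := (min_le_left _ _).trans (le_max_left _ _)
  set c : ℝ := min (max m lo) hi with hc
  have hc1 : lo ≤ c := le_min ((le_max_right _ _)) ((min_le_left _ _).trans (le_max_left _ _))
  have hc2 : c ≤ hi := min_le_right _ _
  have hcl : ℓ ≤ c := le_trans (le_min hpl hql) hc1
  have hcu : c ≤ u := hc2.trans (max_le hpu hqu)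
  -- key: U m ≤ U c
  have hUmc : U m ≤ U c := by
    rcases lt_or_ge m lo with hcase | hcase
    · -- m < lo, so c = lo, and lo ≤ min aS α
      have hceq : c = lo := by
        rw [hc, max_eq_right hcase.le, min_eq_left hlohi]
      have hlp : ℓ < p := lt_of_le_of_lt hml (hcase.trans_le (min_le_left _ _))
      have hlq : ℓ < q := lt_of_le_of_lt hml (hcase.trans_le (min_le_right _ _))
      have hpaS : p ≤ aS := by
        rw [hp]
        have : ℓ < min aS u := by
          by_contra h
          push_neg at h
          rw [hp, max_eq_left h] at hlp
          exact lt_irrefl _ hlp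
        rw [max_eq_right this.le]
        exact min_le_left _ _
      have hqα : q ≤ α := by
        rw [hq]
        have : ℓ < min α u := by
          by_contra h
          push_neg at h
          rw [hq, max_eq_left h] at hlq
          exact lt_irrefl _ hlq
        rw [max_eq_right this.le]
        exact min_le_left _ _
      have hcaS : c ≤ aS := hceq ▸ (min_le_left _ _).trans hpaS
      have hcα : c ≤ α := hceq ▸ (min_le_right _ _).trans hqα
      have hmc : m ≤ c := hceq ▸ hcase.le
      have hR1 : R m ≤ R c := concave_mono_left hR hRmax hmc hcaS
      have hsq : (c - α) ^ 2 ≤ (m - α) ^ 2 := by nlinarith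
      simp only [hUdef]
      nlinarith
    · rcases le_or_gt m hi with hcase2 | hcase2
      · have hceq : c = m := by rw [hc, max_eq_left hcase, min_eq_left hcase2]
        rw [hceq]
      · -- m > hi, so c = hi, and max aS α ≤ hi
        have hceq : c = hi := by
          rw [hc, min_eq_right]
          exact le_max_of_le_left hcase2.le
        have hpu' : p < u := lt_of_lt_of_le (lt_of_le_of_lt (le_max_left _ _) hcase2) hmu
        have hqu' : q < u := lt_of_lt_of_le (lt_of_le_of_lt (le_max_right _ _) hcase2) hmu
        have haSp : aS ≤ p := by
          rw [hp]
          have haSu : aS < u := by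
            by_contra h
            push_neg at h
            rw [hp, min_eq_right h, max_eq_right hlu] at hpu'
            exact lt_irrefl _ hpu'
          rw [min_eq_left haSu.le]
          exact le_max_right _ _
        have hαq : α ≤ q := by
          rw [hq]
          have hαu : α < u := by
            by_contra h
            push_neg at h
            rw [hq, min_eq_right h, max_eq_right hlu] at hqu'
            exact lt_irrefl _ hqu'
          rw [min_eq_left hαu.le]
          exact le_max_right _ _
        have haSc : aS ≤ c := hceq ▸ haSp.trans (le_max_left _ _)
        have hαc : α ≤ c := hceq ▸ hαq.trans (le_max_right _ _)
        have hcm : c ≤ m := hceq ▸ hcase2.le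
        have hR1 : R m ≤ R c := concave_anti_right hR hRmax haSc hcm
        have hsq : (c - α) ^ 2 ≤ (m - α) ^ 2 := by nlinarith
        simp only [hUdef]
        nlinarith
  have hcmax : IsMaxOn U (Set.Icc ℓ u) c := by
    intro a ha
    exact le_trans (hmmax ha) hUmc
  -- now produce ω
  rcases eq_or_ne p q with hpq | hpq
  · refine ⟨1, ⟨zero_le_one, le_rfl⟩, ?_⟩
    have hce : c = p := by
      have : lo = p := by rw [hlo, hpq, min_self]
      have h2 : hi = p := by rw [hhi, hpq, max_self]
      have := hc1
      have := hc2
      rw [‹lo = p›] at hc1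
      rw [h2] at hc2
      linarith
    have : (1:ℝ) * p + (1 - 1) * q = c := by rw [hce]; ring
    rw [hp, hq] at this
    rw [this]
    exact hcmax
  · refine ⟨(c - q) / (p - q), ?_, ?_⟩
    · rcases lt_or_gt_of_ne hpq with h | h
      · -- p < q : lo = p, hi = q, p ≤ c ≤ q, p - q < 0
        have hlo' : lo = p := min_eq_left h.le
        have hhi' : hi = q := max_eq_right h.le
        have h1 : p ≤ c := hlo' ▸ hc1
        have h2 : c ≤ q := hhi' ▸ hc2
        refine ⟨div_nonneg_iff.mpr (Or.inr ⟨by linarith, by linarith⟩), ?_⟩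
        exact div_le_one_iff.mpr (Or.inr (Or.inr ⟨by linarith, by linarith⟩))
      · have hlo' : lo = q := min_eq_right h.le
        have hhi' : hi = p := max_eq_left h.le
        have h1 : q ≤ c := hlo' ▸ hc1
        have h2 : c ≤ p := hhi' ▸ hc2
        constructor
        · apply div_nonneg <;> linarith
        · rw [div_le_one (by linarith)]; linarith
    · have hne : p - q ≠ 0 := sub_ne_zero_of_ne hpq
      have hcomb : (c - q) / (p - q) * p + (1 - (c - q) / (p - q)) * q = c := by
        field_simp
        ring
      rw [hp, hq] at hcomb
      rw [hcomb]
      exact hcmax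
end

section
/- Let θ_t ∈ [ε, 1-ε] evolve by θ_{t+1} = clip(θ_t - η_t·δ_t, ε, 1-ε) with η_t > 0, Σ_t η_t = ∞, and δ_t ≥ δ·(θ_t - ε) for some δ > 0 (drift strictly negative whenever θ_t > ε). Then θ_t → ε as t → ∞. -/
/-!
The clipped iterates stay above `ε` and, since the drift is then nonnegative, they decrease; so
they converge to some `L ≥ ε`. If `L > ε`, the clip at `ε` is never active and every step
lowers `θ` by at least `δ (L - ε) η_t`, so the sequence, bounded below by `ε`, would force
`∑ η_t` to stay bounded.
-/

open Filter Topology Finset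

lemma le_sub_mul_sum_of_succ_le {x η : ℕ → ℝ} {c : ℝ} (h : ∀ t, x (t + 1) ≤ x t - c * η t)
    (n : ℕ) : x n ≤ x 0 - c * ∑ t ∈ range n, η t := by
  induction n with
  | zero => simp
  | succ n ih =>
    rw [sum_range_succ, mul_add]
    linarith [h n]

lemma not_tendsto_sum_atTop_of_succ_le {x η : ℕ → ℝ} {a c : ℝ} (hc : 0 < c)
    (hx : ∀ t, a ≤ x t) (h : ∀ t, x (t + 1) ≤ x t - c * η t) :
    ¬ Tendsto (fun n => ∑ t ∈ range n, η t) atTop atTop := by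
  intro hsum
  obtain ⟨n, hn⟩ := (hsum.eventually_gt_atTop ((x 0 - a) / c)).exists
  rw [div_lt_iff₀' hc] at hn
  linarith [le_sub_mul_sum_of_succ_le h n, hx n]

section ClippedRecursion

variable {ε b δ : ℝ} {η d θ : ℕ → ℝ}
  (hrec : ∀ t, θ (t + 1) = max ε (min (θ t - η t * d t) b))
include hrec

lemma clipped_succ_le (t : ℕ) : θ (t + 1) ≤ max ε (θ t - η t * d t) :=
  hrec t ▸ max_le_max le_rfl (min_le_left _ _)

lemma clipped_succ_le_sub {t : ℕ} (hgt : ε < θ (t + 1)) : θ (t + 1) ≤ θ t - η t * d t :=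
  (le_max_iff.1 (clipped_succ_le hrec t)).resolve_left hgt.not_ge

lemma le_clipped (h0 : ε ≤ θ 0) : ∀ t, ε ≤ θ t
  | 0 => h0
  | t + 1 => hrec t ▸ le_max_left _ _

lemma antitone_clipped (h0 : ε ≤ θ 0) (hη : ∀ t, 0 ≤ η t) (hδ : 0 ≤ δ)
    (hdrift : ∀ t, δ * (θ t - ε) ≤ d t) : Antitone θ := by
  refine antitone_nat_of_succ_le fun t => (clipped_succ_le hrec t).trans (max_le ?_ ?_)
  · exact le_clipped hrec h0 t
  · have hd : 0 ≤ d t := (mul_nonneg hδ (sub_nonneg.2 (le_clipped hrec h0 t))).trans (hdrift t)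
    linarith [mul_nonneg (hη t) hd]

end ClippedRecursion

theorem stmt13_general (ε δ : ℝ) (η d θ : ℕ → ℝ)
    (hδ : 0 < δ)
    (hη : ∀ t, 0 < η t)
    (hηsum : Filter.Tendsto (fun n => ∑ t ∈ Finset.range n, η t) Filter.atTop Filter.atTop)
    (hθ0 : θ 0 ∈ Set.Icc ε (1 - ε))
    (hdrift : ∀ t, δ * (θ t - ε) ≤ d t)
    (hrec : ∀ t, θ (t + 1) = max ε (min (θ t - η t * d t) (1 - ε))) :
    Filter.Tendsto θ Filter.atTop (nhds ε) := by
  have hε := le_clipped hrec hθ0.1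
  have hanti := antitone_clipped hrec hθ0.1 (fun t => (hη t).le) hδ.le hdrift
  obtain ⟨L, hL⟩ : ∃ L, Tendsto θ atTop (𝓝 L) :=
    ⟨_, tendsto_atTop_ciInf hanti ⟨ε, Set.forall_mem_range.2 hε⟩⟩
  obtain rfl | hεL := (ge_of_tendsto' hL hε).eq_or_lt
  · exact hL
  have hLθ := hanti.le_of_tendsto hL
  refine absurd hηsum (not_tendsto_sum_atTop_of_succ_le (mul_pos hδ (sub_pos.2 hεL)) hε
    fun t => ?_)
  calc θ (t + 1) ≤ θ t - η t * d t := clipped_succ_le_sub hrec (hεL.trans_le (hLθ _))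
    _ ≤ θ t - δ * (L - ε) * η t := by
      have hd : δ * (L - ε) ≤ d t := by
        refine le_trans ?_ (hdrift t)
        gcongr
        exact hLθ t
      linarith [mul_le_mul_of_nonneg_left hd (hη t).le]

/-- The clipped recursion `θ_{t+1} = clip(θ_t - η_t·δ_t, ε, 1-ε)` with
`δ_t ≥ δ·(θ_t - ε)`, `δ > 0`, `η_t > 0` and `Σ η_t = ∞` converges to `ε`. -/
theorem stmt13 (ε δ : ℝ) (η d θ : ℕ → ℝ)
    (hε : 0 < ε) (hδ : 0 < δ)
    (hη : ∀ t, 0 < η t)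
    (hηsum : Filter.Tendsto (fun n => ∑ t ∈ Finset.range n, η t) Filter.atTop Filter.atTop)
    (hθ0 : θ 0 ∈ Set.Icc ε (1 - ε))
    (hdrift : ∀ t, δ * (θ t - ε) ≤ d t)
    (hrec : ∀ t, θ (t + 1) = max ε (min (θ t - η t * d t) (1 - ε))) :
    Filter.Tendsto θ Filter.atTop (nhds ε) :=
  stmt13_general ε δ η d θ hδ hη hηsum hθ0 hdrift hrec
end

section
/- Let f be a positive continuous density with CDF F. Define R(a) = (s/c)·∫_{F⁻¹(1 - (c0 + a·c)/s)}^{u0} x f(x) dx + ((1-s)/c)·∫_{F⁻¹(1 - (c1 + (1-a)·c)/(1-s))}^{u1} x f(x) dx on the interior of the feasible interval. Then R''(a) = -(c/s)/f(F⁻¹(1 - (c0 + a·c)/s)) - (c/(1-s))/f(F⁻¹(1 - (c1 + (1-a)·c)/(1-s))) < 0, so R is strictly concave. -/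
open Set Filter Topology intervalIntegral

/-! Both lower integration limits are quantiles `F⁻¹(p(a))` of affine functions `p` of `a`. The
fundamental theorem of calculus and `(F⁻¹)' = 1 / f ∘ F⁻¹` cancel the density in the first
derivative, which is just `F⁻¹(p₀(a)) - F⁻¹(p₁(a))`. Differentiating once more gives the stated
`R''`, negative because `f > 0` and the two slopes have the signs of `-c/s` and `c/(1-s)`. -/

section RightInverse

variable {f F G : ℝ → ℝ} {U : Set ℝ}

/-- A right inverse `G` of an injective `C¹` map `F` is a left inverse near `G q`, so the strict
inverse function theorem applies. -/
theorem hasDerivAt_of_rightInverse (hF : ∀ x, HasDerivAt F (f x) x) (hFinj : F.Injective)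
    (hU : IsOpen U) (hGU : ∀ y ∈ U, F (G y) = y) {q : ℝ} (hq : q ∈ U)
    (hf : ContinuousAt f (G q)) (hfq : f (G q) ≠ 0) :
    HasDerivAt G (f (G q))⁻¹ q := by
  have hstrict : HasStrictDerivAt F (f (G q)) (G q) :=
    hasStrictDerivAt_of_hasDerivAt_of_continuousAt (Eventually.of_forall hF) hf
  have hleft : ∀ᶠ x in 𝓝 (G q), G (F x) = x := by
    have hU' : U ∈ 𝓝 (F (G q)) := by rw [hGU q hq]; exact hU.mem_nhds hq
    filter_upwards [(hF (G q)).continuousAt.preimage_mem_nhds hU'] with x hx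
    exact hFinj (hGU _ hx)
  simpa only [hGU q hq] using (hstrict.to_local_left_inverse hfq hleft).hasDerivAt

theorem HasDerivAt.rightInverse_comp (hF : ∀ x, HasDerivAt F (f x) x) (hFinj : F.Injective)
    (hU : IsOpen U) (hGU : ∀ y ∈ U, F (G y) = y) {p : ℝ → ℝ} {p' a : ℝ}
    (hp : HasDerivAt p p' a) (hpU : p a ∈ U) (hf : ContinuousAt f (G (p a)))
    (hfp : f (G (p a)) ≠ 0) :
    HasDerivAt (fun a => G (p a)) (p' / f (G (p a))) a := by
  rw [div_eq_inv_mul]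
  exact (hasDerivAt_of_rightInverse hF hFinj hU hGU hpU hf hfp).comp a hp

theorem hasDerivAt_mul_integral_rightInverse_comp (hF : ∀ x, HasDerivAt F (f x) x)
    (hFinj : F.Injective) (hU : IsOpen U) (hGU : ∀ y ∈ U, F (G y) = y) (hf : Continuous f)
    {p : ℝ → ℝ} {p' a : ℝ} (hp : HasDerivAt p p' a) (hpU : p a ∈ U) (hfp : f (G (p a)) ≠ 0)
    (w b : ℝ) :
    HasDerivAt (fun a => w * ∫ x in G (p a)..b, x * f x) (-(w * p') * G (p a)) a := by
  have hφ : Continuous fun x => x * f x := continuous_id.mul hf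
  have hI := (integral_hasDerivAt_left (hφ.intervalIntegrable _ b)
    (hφ.stronglyMeasurableAtFilter _ _) hφ.continuousAt).comp a
    (hp.rightInverse_comp hF hFinj hU hGU hpU hf.continuousAt hfp)
  exact (hI.const_mul w).congr_deriv (by field_simp)

end RightInverse

theorem stmt14_general (f F Finv : ℝ → ℝ) (c0 c1 c s u0 u1 l u : ℝ)
    (hf : Continuous f) (hfpos : ∀ x, 0 < f x)
    (hF : ∀ x, HasDerivAt F (f x) x) (hFmono : StrictMono F)
    (hinv : ∀ q ∈ Set.Ioo (0:ℝ) 1, F (Finv q) = q)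
    (hs : s ∈ Set.Ioo (0:ℝ) 1) (hc : c ∈ Set.Ioo (0:ℝ) 1)
    (hargs : ∀ a ∈ Set.Ioo l u,
      (1 - (c0 + a * c) / s) ∈ Set.Ioo (0:ℝ) 1 ∧
      (1 - (c1 + (1 - a) * c) / (1 - s)) ∈ Set.Ioo (0:ℝ) 1)
    (R : ℝ → ℝ)
    (hR : ∀ a, R a = (s / c) * (∫ x in (Finv (1 - (c0 + a * c) / s))..u0, x * f x)
        + ((1 - s) / c) * ∫ x in (Finv (1 - (c1 + (1 - a) * c) / (1 - s)))..u1, x * f x) :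
    (∀ a ∈ Set.Ioo l u,
      deriv (deriv R) a
          = -(c / s) / f (Finv (1 - (c0 + a * c) / s))
            - (c / (1 - s)) / f (Finv (1 - (c1 + (1 - a) * c) / (1 - s)))
        ∧ deriv (deriv R) a < 0) ∧
    StrictConcaveOn ℝ (Set.Ioo l u) R := by
  have hs' : 0 < 1 - s := sub_pos.2 hs.2
  have hf0 : ∀ x, f x ≠ 0 := fun x => (hfpos x).ne'
  have hinj : F.Injective := hFmono.injective
  set q0 : ℝ → ℝ := fun a => 1 - (c0 + a * c) / s
  set q1 : ℝ → ℝ := fun a => 1 - (c1 + (1 - a) * c) / (1 - s)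
  have hq0 : ∀ a, HasDerivAt q0 (-(c / s)) a := fun a => by
    simpa using ((((hasDerivAt_id a).mul_const c).const_add c0).div_const s).const_sub 1
  have hq1 : ∀ a, HasDerivAt q1 (c / (1 - s)) a := fun a => by
    simpa [neg_div] using
      (((((hasDerivAt_id a).const_sub 1).mul_const c).const_add c1).div_const (1 - s)).const_sub 1
  have hR' : ∀ a ∈ Ioo l u, HasDerivAt R (Finv (q0 a) - Finv (q1 a)) a := fun a ha => by
    have hw0 : s / c * -(c / s) = -1 := by field_simp [hs.1.ne', hc.1.ne']
    have hw1 : (1 - s) / c * (c / (1 - s)) = 1 := by field_simp [hs'.ne', hc.1.ne']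
    rw [funext hR]
    refine ((hasDerivAt_mul_integral_rightInverse_comp hF hinj isOpen_Ioo hinv hf (hq0 a)
      (hargs a ha).1 (hf0 _) (s / c) u0).add (hasDerivAt_mul_integral_rightInverse_comp hF hinj
      isOpen_Ioo hinv hf (hq1 a) (hargs a ha).2 (hf0 _) ((1 - s) / c) u1)).congr_deriv ?_
    rw [hw0, hw1]
    ring
  have hR'' : ∀ a ∈ Ioo l u, HasDerivAt (deriv R)
      (-(c / s) / f (Finv (q0 a)) - (c / (1 - s)) / f (Finv (q1 a))) a := fun a ha =>
    (((hq0 a).rightInverse_comp hF hinj isOpen_Ioo hinv (hargs a ha).1 hf.continuousAt (hf0 _)).sub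
      ((hq1 a).rightInverse_comp hF hinj isOpen_Ioo hinv (hargs a ha).2 hf.continuousAt (hf0 _))
      ).congr_of_eventuallyEq <|
      eventually_of_mem (isOpen_Ioo.mem_nhds ha) fun b hb => (hR' b hb).deriv
  have hneg : ∀ a ∈ Ioo l u, deriv (deriv R) a < 0 := fun a ha => by
    rw [(hR'' a ha).deriv, neg_div]
    have := div_pos (div_pos hc.1 hs.1) (hfpos (Finv (q0 a)))
    have := div_pos (div_pos hc.1 hs') (hfpos (Finv (q1 a)))
    linarith
  exact ⟨fun a ha => ⟨(hR'' a ha).deriv, hneg a ha⟩,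
    strictConcaveOn_of_deriv2_neg' (convex_Ioo l u)
      (fun a ha => (hR' a ha).continuousAt.continuousWithinAt) hneg⟩

/-- For
`R(a) = (s/c)·∫_{F⁻¹(1-(c0+a·c)/s)}^{u0} x f(x) dx + ((1-s)/c)·∫_{F⁻¹(1-(c1+(1-a)·c)/(1-s))}^{u1} x f(x) dx`,
the second derivative equals
`-(c/s)/f(F⁻¹(1-(c0+a·c)/s)) - (c/(1-s))/f(F⁻¹(1-(c1+(1-a)·c)/(1-s))) < 0`,
so `R` is strictly concave. -/
theorem stmt14 (f F Finv : ℝ → ℝ) (c0 c1 c s u0 u1 l u : ℝ)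
    (hf : Continuous f) (hfpos : ∀ x, 0 < f x)
    (hF : ∀ x, HasDerivAt F (f x) x) (hFmono : StrictMono F)
    (hinv : ∀ q ∈ Set.Ioo (0:ℝ) 1, F (Finv q) = q)
    (hs : s ∈ Set.Ioo (0:ℝ) 1) (hc : c ∈ Set.Ioo (0:ℝ) 1)
    (hc0 : 0 ≤ c0) (hc1 : 0 ≤ c1) (hlu : l < u)
    (hargs : ∀ a ∈ Set.Ioo l u,
      (1 - (c0 + a * c) / s) ∈ Set.Ioo (0:ℝ) 1 ∧
      (1 - (c1 + (1 - a) * c) / (1 - s)) ∈ Set.Ioo (0:ℝ) 1)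
    (R : ℝ → ℝ)
    (hR : ∀ a, R a = (s / c) * (∫ x in (Finv (1 - (c0 + a * c) / s))..u0, x * f x)
        + ((1 - s) / c) * ∫ x in (Finv (1 - (c1 + (1 - a) * c) / (1 - s)))..u1, x * f x) :
    (∀ a ∈ Set.Ioo l u,
      deriv (deriv R) a
          = -(c / s) / f (Finv (1 - (c0 + a * c) / s))
            - (c / (1 - s)) / f (Finv (1 - (c1 + (1 - a) * c) / (1 - s)))
        ∧ deriv (deriv R) a < 0) ∧
    StrictConcaveOn ℝ (Set.Ioo l u) R :=
  stmt14_general f F Finv c0 c1 c s u0 u1 l u hf hfpos hF hFmono hinv hs hc hargs R hR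
end
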